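/- For every d ≥ 1 there exists an affine measurement scheme with 3d measurements recovering every x ∈ ℂ^d exactly: namely, there exist A ∈ ℂ^{3d×d} and b ∈ ℂ^{3d} (giving the measurements sign(x_k), sign(x_k+1), sign(x_k+i) for k ∈ [d]) such that for all x, y ∈ ℂ^d, sign(Ax + b) = sign(Ay + b) implies x = y. -/

import Mathlib

/-!
`csign z` determines `z` up to a positive real factor, i.e. it determines the ray from `0`
through `z`; likewise `csign (z + 1)` and `csign (z + I)` determine the rays from `-1` and `-I`
through `z`. A point `z ≠ 0` is off the real or off the imaginary axis, so one of the last two rays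
is not collinear with the first, and two non-collinear rays meet in at most one point.
-/

noncomputable def csign (z : ℂ) : ℂ := if z = 0 then 0 else z / ((‖z‖ : ℝ) : ℂ)

open Complex

lemma csign_eq_zero_iff {z : ℂ} : csign z = 0 ↔ z = 0 := by
  unfold csign
  split_ifs with hz <;> simp [hz]

lemma exists_pos_mul_of_csign_eq {z w : ℂ} (h : csign z = csign w) :
    ∃ t : ℝ, 0 < t ∧ w = t * z := by
  by_cases hz : z = 0
  · have hw : w = 0 := csign_eq_zero_iff.1 (h.symm.trans (csign_eq_zero_iff.2 hz))
    exact ⟨1, one_pos, by simp [hz, hw]⟩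
  have hw : w ≠ 0 := fun hw => hz (csign_eq_zero_iff.1 (h.trans (csign_eq_zero_iff.2 hw)))
  refine ⟨‖w‖ / ‖z‖, by positivity, ?_⟩
  have hz' : ((‖z‖ : ℝ) : ℂ) ≠ 0 := by simpa using hz
  have hw' : ((‖w‖ : ℝ) : ℂ) ≠ 0 := by simpa using hw
  unfold csign at h
  rw [if_neg hz, if_neg hw] at h
  push_cast
  field_simp at h ⊢
  linear_combination -h

lemma eq_of_real_rescalings {z w : ℂ} {t s r : ℝ} (ht : w = t * z) (hs : w + 1 = s * (z + 1))
    (hr : w + I = r * (z + I)) : z = w := by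
  by_cases hz : z = 0
  · simp [ht, hz]
  have hts : (t : ℂ) * z + 1 = s * (z + 1) := ht ▸ hs
  have htr : (t : ℂ) * z + I = r * (z + I) := ht ▸ hr
  have hs_re := congrArg re hts
  have hs_im := congrArg im hts
  have hr_re := congrArg re htr
  have hr_im := congrArg im htr
  simp only [add_re, mul_re, ofReal_re, ofReal_im, zero_mul, sub_zero, one_re, add_im, one_im,
    add_zero, mul_im, mul_eq_mul_right_iff, I_re, I_im] at hs_re hs_im hr_re hr_im
  have ht1 : t = 1 := by
    have hz' : z.re ≠ 0 ∨ z.im ≠ 0 := by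
      contrapose! hz
      exact Complex.ext hz.1 hz.2
    rcases hz' with h | h
    · have : t = r := hr_re.resolve_right h
      linear_combination (1 + z.im) * this - hr_im
    · have : t = s := hs_im.resolve_right h
      linear_combination (1 + z.re) * this - hs_re
  simp [ht, ht1]

theorem eq_of_csign_eq_of_csign_add_one_eq_of_csign_add_I_eq {z w : ℂ} (h0 : csign z = csign w)
    (h1 : csign (z + 1) = csign (w + 1)) (h2 : csign (z + I) = csign (w + I)) : z = w := by
  obtain ⟨t, -, ht⟩ := exists_pos_mul_of_csign_eq h0
  obtain ⟨s, -, hs⟩ := exists_pos_mul_of_csign_eq h1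
  obtain ⟨r, -, hr⟩ := exists_pos_mul_of_csign_eq h2
  exact eq_of_real_rescalings ht hs hr

theorem stmt_14_general (d : ℕ) :
    ∃ (A : Matrix (Fin (3 * d)) (Fin d) ℂ) (b : Fin (3 * d) → ℂ),
      ∀ x y : Fin d → ℂ,
        (∀ j, csign (A.mulVec x j + b j) = csign (A.mulVec y j + b j)) → x = y := by
  refine ⟨Matrix.of fun j k => if (finProdFinEquiv.symm j).2 = k then 1 else 0,
    fun j => ![0, 1, I] (finProdFinEquiv.symm j).1, fun x y h => funext fun k => ?_⟩
  have hk (i : Fin 3) := h (finProdFinEquiv (i, k))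
  simp only [Matrix.mulVec, dotProduct, Matrix.of_apply, Equiv.symm_apply_apply, ite_mul, one_mul,
    zero_mul, Finset.sum_ite_eq, Finset.mem_univ, if_true] at hk
  exact eq_of_csign_eq_of_csign_add_one_eq_of_csign_add_I_eq (by simpa using hk 0) (hk 1) (hk 2)

theorem stmt_14 (d : ℕ) (hd : 1 ≤ d) :
    ∃ (A : Matrix (Fin (3 * d)) (Fin d) ℂ) (b : Fin (3 * d) → ℂ),
      ∀ x y : Fin d → ℂ,
        (∀ j, csign (A.mulVec x j + b j) = csign (A.mulVec y j + b j)) → x = y :=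
  stmt_14_general d
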